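/- arXiv:2605.15605 — 5 statements merged into one kernel-verified Lean document; each statement's English description precedes it below -/
import Mathlib

section
/- With η : A(X) → A the canonical surjection and I = ker η, the image of the embedding Aut(A,F) ↪ Aut(A(X),F) consists exactly of those φ ∈ Aut(A(X),F) with φ(I) = I. -/
open TensorProduct Finsupp

/-- The free `𝓜`-magma on a set `X`. -/
inductive FreeMMagma (𝓜 X : Type) : Type
  | of : X → FreeMMagma 𝓜 X
  | mul : FreeMMagma 𝓜 X → 𝓜 → FreeMMagma 𝓜 X → FreeMMagma 𝓜 X

/-- The length of an element of the free `𝓜`-magma. -/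
def FreeMMagma.len {𝓜 X : Type} : FreeMMagma 𝓜 X → ℕ
  | .of _ => 1
  | .mul a _ b => a.len + b.len

/-- The `m`-product on the free `𝓜`-algebra `A(X)` over `R` (the free `R`-module
on the free `𝓜`-magma), given by bilinear extension of the magma product. -/
noncomputable def fmul {R 𝓜 X : Type} [CommRing R] (m : 𝓜)
    (a b : FreeMMagma 𝓜 X →₀ R) : FreeMMagma 𝓜 X →₀ R :=
  a.sum fun u ru => b.sum fun v rv => Finsupp.single (FreeMMagma.mul u m v) (ru * rv)

/-- Evaluation of elements of the free `𝓜`-magma in an `𝓜`-algebra `A`,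
given products `μ` on `A` and values `ι` on the generators. -/
def magmaEval {R 𝓜 X A : Type} [CommRing R] [AddCommGroup A] [Module R A]
    (μ : 𝓜 → A →ₗ[R] A →ₗ[R] A) (ι : X → A) : FreeMMagma 𝓜 X → A
  | .of x => ι x
  | .mul a m b => μ m (magmaEval μ ι a) (magmaEval μ ι b)

/-- The canonical `𝓜`-algebra homomorphism `η : A(X) → A` which is the identity
on `X`. -/
noncomputable def eta {R 𝓜 X A : Type} [CommRing R] [AddCommGroup A] [Module R A]
    (μ : 𝓜 → A →ₗ[R] A →ₗ[R] A) (ι : X → A) : (FreeMMagma 𝓜 X →₀ R) →ₗ[R] A :=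
  Finsupp.linearCombination R (magmaEval μ ι)

lemma eta_fmul {R 𝓜 X A : Type} [CommRing R] [AddCommGroup A] [Module R A]
    (μ : 𝓜 → A →ₗ[R] A →ₗ[R] A) (ι : X → A) (m : 𝓜) (a b : FreeMMagma 𝓜 X →₀ R) :
    eta μ ι (fmul m a b) = μ m (eta μ ι a) (eta μ ι b) := by
  classical
  have h1 : eta μ ι (fmul m a b) = a.sum fun u ru => b.sum fun v rv =>
      (ru * rv) • μ m (magmaEval μ ι u) (magmaEval μ ι v) := by
    rw [fmul, eta, map_finsuppSum]
    refine Finsupp.sum_congr fun u _ => ?_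
    rw [map_finsuppSum]
    refine Finsupp.sum_congr fun v _ => ?_
    rw [Finsupp.linearCombination_single]
    rfl
  rw [h1, eta, Finsupp.linearCombination_apply, Finsupp.linearCombination_apply]
  simp only [Finsupp.sum]
  have hpush : ∀ z, ((μ m) (∑ x ∈ a.support, a x • magmaEval μ ι x)) z
      = ∑ x ∈ a.support, ((μ m) (a x • magmaEval μ ι x)) z := by
    intro z
    rw [map_sum, LinearMap.coe_sum, Finset.sum_apply]
  simp only [hpush]
  refine Finset.sum_congr rfl fun u _ => ?_
  rw [map_sum]
  refine Finset.sum_congr rfl fun v _ => ?_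
  simp only [map_smul, LinearMap.smul_apply, smul_smul, mul_comm]

lemma eta_surj {R 𝓜 X A : Type} [CommRing R] [AddCommGroup A] [Module R A]
    (μ : 𝓜 → A →ₗ[R] A →ₗ[R] A) (ι : X → A)
    (hgen : ∀ p : Submodule R A, (∀ x, ι x ∈ p) →
      (∀ (m : 𝓜) a b, a ∈ p → b ∈ p → μ m a b ∈ p) → p = ⊤) :
    Function.Surjective (eta μ ι) := by
  rw [← LinearMap.range_eq_top]
  refine hgen _ (fun x => ⟨Finsupp.single (.of x) 1, by simp [eta]; rfl⟩) ?_
  rintro m a b ⟨u, rfl⟩ ⟨v, rfl⟩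
  exact ⟨fmul m u v, eta_fmul μ ι m u v⟩

/-- **Proposition 2 (iii).** Let `η : A(X) → A` be the canonical surjection and
`I = ker η`. The image of the embedding `Aut(A, F) ↪ Aut(A(X), F)` consists
exactly of those `ψ ∈ Aut(A(X), F)` with `ψ(I) = I`. -/
theorem image_of_embedding_eq_ideal_preserving {R 𝓜 X A : Type} [CommRing R] [Nonempty 𝓜]
    [AddCommGroup A] [Module R A] (μ : 𝓜 → A →ₗ[R] A →ₗ[R] A)
    (ι : X → A) (hli : LinearIndependent R ι)
    (hgen : ∀ p : Submodule R A, (∀ x, ι x ∈ p) →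
      (∀ (m : 𝓜) a b, a ∈ p → b ∈ p → μ m a b ∈ p) → p = ⊤)
    (F : Submodule R A) (hF : F = Submodule.span R (Set.range ι))
    (F' : Submodule R (FreeMMagma 𝓜 X →₀ R))
    (hF' : F' = Submodule.span R
      (Set.range fun x => Finsupp.single (FreeMMagma.of x) (1 : R)))
    -- ψ is an 𝓜-algebra automorphism of A(X) preserving F'
    (ψ : (FreeMMagma 𝓜 X →₀ R) ≃ₗ[R] (FreeMMagma 𝓜 X →₀ R))
    (hψ : ∀ (m : 𝓜) a b, ψ (fmul m a b) = fmul m (ψ a) (ψ b))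
    (hψF : Submodule.map (ψ : (FreeMMagma 𝓜 X →₀ R) →ₗ[R] (FreeMMagma 𝓜 X →₀ R)) F' = F') :
    -- ψ is in the image of Aut(A,F) ↪ Aut(A(X),F)  ↔  ψ(I) = I
    (Submodule.map (ψ : (FreeMMagma 𝓜 X →₀ R) →ₗ[R] (FreeMMagma 𝓜 X →₀ R))
        (LinearMap.ker (eta μ ι)) = LinearMap.ker (eta μ ι)) ↔
      ∃ θ : A ≃ₗ[R] A,
        (∀ (m : 𝓜) a b, θ (μ m a b) = μ m (θ a) (θ b)) ∧
        Submodule.map (θ : A →ₗ[R] A) F = F ∧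
        (eta μ ι).comp (ψ : (FreeMMagma 𝓜 X →₀ R) →ₗ[R] (FreeMMagma 𝓜 X →₀ R)) =
          (θ : A →ₗ[R] A).comp (eta μ ι) := by
  
  have hsurj := eta_surj μ ι hgen
  constructor
  · intro hI
    let e1 := (eta μ ι).quotKerEquivOfSurjective hsurj
    let q := Submodule.Quotient.equiv _ _ ψ hI
    let θ : A ≃ₗ[R] A := e1.symm.trans (q.trans e1)
    have he1 : ∀ x, e1 (Submodule.Quotient.mk x) = eta μ ι x := fun x => rfl
    have hcomm : ∀ x, θ (eta μ ι x) = eta μ ι (ψ x) := by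
      intro x
      have h1 : e1.symm (eta μ ι x) = Submodule.Quotient.mk x := by
        rw [LinearEquiv.symm_apply_eq]; exact (he1 x).symm
      show e1 (q (e1.symm (eta μ ι x))) = _
      rw [h1]
      have h2 : q (Submodule.Quotient.mk x) = Submodule.Quotient.mk (ψ x) := by
        simp [q, Submodule.Quotient.equiv, Submodule.mapQ_apply]
      rw [h2]; exact he1 (ψ x)
    have hc : ((θ : A →ₗ[R] A).comp (eta μ ι)) = (eta μ ι).comp (ψ : _ →ₗ[R] _) :=
      LinearMap.ext fun x => hcomm x
    have hmapF' : Submodule.map (eta μ ι) F' = F := by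
      rw [hF', hF, Submodule.map_span, ← Set.range_comp]
      have hfun : (⇑(eta μ ι) ∘ fun x => Finsupp.single (FreeMMagma.of x) (1 : R)) = ι := by
        funext x
        simp only [Function.comp_apply, eta, Finsupp.linearCombination_single, one_smul]
        rfl
      rw [hfun]
    refine ⟨θ, ?_, ?_, hc.symm⟩
    · intro m a b
      obtain ⟨u, rfl⟩ := hsurj a
      obtain ⟨v, rfl⟩ := hsurj b
      rw [← eta_fmul, hcomm, hcomm, hcomm, hψ, eta_fmul]
    · conv_lhs => rw [← hmapF', ← Submodule.map_comp, hc, Submodule.map_comp, hψF, hmapF']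
  · rintro ⟨θ, hθmul, hθF, hcomp⟩
    apply le_antisymm
    · rintro _ ⟨x, hx, rfl⟩
      have h := LinearMap.congr_fun hcomp x
      simp only [LinearMap.coe_comp, Function.comp_apply, LinearEquiv.coe_coe] at h
      simp only [SetLike.mem_coe, LinearMap.mem_ker] at hx ⊢
      exact h.trans (by rw [hx, map_zero])
    · intro y hy
      refine ⟨ψ.symm y, ?_, by simp⟩
      have h := LinearMap.congr_fun hcomp (ψ.symm y)
      simp only [LinearMap.coe_comp, Function.comp_apply, LinearEquiv.coe_coe,
        LinearEquiv.apply_symm_apply] at h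
      simp only [SetLike.mem_coe, LinearMap.mem_ker] at hy ⊢
      have : θ (eta μ ι (ψ.symm y)) = 0 := by rw [← h]; exact hy
      exact (map_eq_zero_iff _ θ.injective).mp this
end

section
/- The automorphism group functor Aut(A), sending S ∈ R-alg to the group of S-linear 𝓜-algebra automorphisms of A ⊗_R S, is a sheaf of groups for the fppf (faithfully flat) topology on R-algebras. -/
open TensorProduct

set_option linter.unusedVariables false

namespace AutSheafAux

variable (R A S S' : Type) [CommRing R] [AddCommGroup A] [Module R A]
  [CommRing S] [CommRing S'] [Algebra R S] [Algebra R S']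
  [Algebra S S'] [IsScalarTower R S S']

noncomputable def F : S ⊗[R] A →ₗ[S] S' ⊗[R] A :=
  AlgebraTensorModule.map (Algebra.linearMap S S') LinearMap.id

@[simp] lemma F_tmul (s : S) (a : A) :
    F R A S S' (s ⊗ₜ[R] a) = algebraMap S S' s ⊗ₜ[R] a := rfl

noncomputable def sig : S' ⊗[S] (S' ⊗[R] A) →ₗ[S'] S' ⊗[S] (S ⊗[R] A) :=
  LinearMap.liftBaseChange S'
    (((AlgebraTensorModule.cancelBaseChange R S S' S' A).symm.toLinearMap).restrictScalars S)

@[simp] lemma sig_tmul (s x : S') (a : A) :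
    sig R A S S' (s ⊗ₜ[S] (x ⊗ₜ[R] a)) = (s * x) ⊗ₜ[S] ((1 : S) ⊗ₜ[R] a) := by
  simp [sig, LinearMap.liftBaseChange_tmul, smul_tmul']

noncomputable def tau :
    S' ⊗[S] ((S' ⊗[S] S') ⊗[R] A) →ₗ[S'] S' ⊗[S] (S' ⊗[R] A) :=
  LinearMap.liftBaseChange S'
    (((AlgebraTensorModule.assoc R S S' S' S' A).toLinearMap).restrictScalars S)

@[simp] lemma tau_tmul (s x y : S') (a : A) :
    tau R A S S' (s ⊗ₜ[S] ((x ⊗ₜ[S] y) ⊗ₜ[R] a)) = (s * x) ⊗ₜ[S] (y ⊗ₜ[R] a) := by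
  simp [tau, LinearMap.liftBaseChange_tmul, smul_tmul']

lemma sig_F (y : S' ⊗[S] (S ⊗[R] A)) :
    sig R A S S' ((F R A S S').lTensor S' y) = y := by
  induction y using TensorProduct.induction_on with
  | zero => simp
  | add u v hu hv => simp [map_add, hu, hv]
  | tmul s x =>
    induction x using TensorProduct.induction_on with
    | zero => simp
    | add u v hu hv => rw [tmul_add, map_add, map_add, hu, hv]
    | tmul t a =>
      rw [LinearMap.lTensor_tmul, F_tmul, sig_tmul]
      rw [show s * algebraMap S S' t = t • s by rw [Algebra.smul_def, mul_comm]]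
      rw [smul_tmul]
      congr 1
      rw [smul_tmul', smul_eq_mul, mul_one]


noncomputable def I1 : S' ⊗[R] A →ₗ[S] (S' ⊗[S] S') ⊗[R] A :=
  AlgebraTensorModule.map ((TensorProduct.mk S S' S').flip 1) LinearMap.id

noncomputable def I2 : S' ⊗[R] A →ₗ[S] (S' ⊗[S] S') ⊗[R] A :=
  AlgebraTensorModule.map (TensorProduct.mk S S' S' 1) LinearMap.id

@[simp] lemma I1_tmul (x : S') (a : A) :
    I1 R A S S' (x ⊗ₜ[R] a) = (x ⊗ₜ[S] (1 : S')) ⊗ₜ[R] a := rfl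

@[simp] lemma I2_tmul (x : S') (a : A) :
    I2 R A S S' (x ⊗ₜ[R] a) = ((1 : S') ⊗ₜ[S] x) ⊗ₜ[R] a := rfl

noncomputable def G : S' ⊗[R] A →ₗ[S] (S' ⊗[S] S') ⊗[R] A :=
  I1 R A S S' - I2 R A S S'

lemma G_apply (x : S' ⊗[R] A) :
    G R A S S' x = I1 R A S S' x - I2 R A S S' x := rfl

lemma I1_F_eq_I2_F (x : S ⊗[R] A) :
    I1 R A S S' (F R A S S' x) = I2 R A S S' (F R A S S' x) := by
  induction x using TensorProduct.induction_on with
  | zero => simp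
  | add u v hu hv => simp [map_add, hu, hv]
  | tmul s a =>
    simp only [F_tmul, I1_tmul, I2_tmul]
    congr 1
    rw [Algebra.algebraMap_eq_smul_one, smul_tmul]

lemma G_F (x : S ⊗[R] A) : G R A S S' (F R A S S' x) = 0 := by
  rw [G_apply, I1_F_eq_I2_F, sub_self]

/-- The contracting homotopy identity. -/
lemma homotopy (y : S' ⊗[S] (S' ⊗[R] A)) :
    (F R A S S').lTensor S' (sig R A S S' y)
      - tau R A S S' ((G R A S S').lTensor S' y) = y := by
  induction y using TensorProduct.induction_on with
  | zero => simp
  | add u v hu hv =>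
    simp only [map_add]
    rw [add_sub_add_comm, hu, hv]
  | tmul s x =>
    induction x using TensorProduct.induction_on with
    | zero => simp
    | add u v hu hv =>
      simp only [tmul_add, map_add]
      rw [add_sub_add_comm, hu, hv]
    | tmul t a =>
      rw [sig_tmul, LinearMap.lTensor_tmul, LinearMap.lTensor_tmul, F_tmul, map_one,
        G_apply, I1_tmul, I2_tmul, tmul_sub, map_sub, tau_tmul, tau_tmul, mul_one]
      abel

lemma exact_lTensor :
    Function.Exact ((F R A S S').lTensor S') ((G R A S S').lTensor S') := by
  intro y
  constructor
  · intro h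
    refine ⟨sig R A S S' y, ?_⟩
    have hy := homotopy R A S S' y
    rw [h, map_zero, sub_zero] at hy
    exact hy
  · rintro ⟨x, rfl⟩
    rw [← LinearMap.lTensor_comp_apply]
    have : (G R A S S') ∘ₗ (F R A S S') = 0 := LinearMap.ext fun z => G_F R A S S' z
    rw [this, LinearMap.lTensor_zero, LinearMap.zero_apply]

variable [Module.FaithfullyFlat S S']

lemma exact_F_G : Function.Exact (F R A S S') (G R A S S') :=
  Module.FaithfullyFlat.lTensor_reflects_exact S S' _ _ (exact_lTensor R A S S')

lemma F_injective : Function.Injective (F R A S S') := by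
  have h0 : Function.Exact ((0 : PUnit.{1} →ₗ[S] S ⊗[R] A).lTensor S')
      ((F R A S S').lTensor S') := by
    intro y
    constructor
    · intro h
      refine ⟨0, ?_⟩
      rw [map_zero]
      rw [← sig_F R A S S' y, h, map_zero]
    · rintro ⟨x, rfl⟩
      rw [LinearMap.lTensor_zero, LinearMap.zero_apply, map_zero]
  have hex : Function.Exact (0 : PUnit.{1} →ₗ[S] S ⊗[R] A) (F R A S S') :=
    Module.FaithfullyFlat.lTensor_reflects_exact S S' _ _ h0
  intro x y hxy
  have : F R A S S' (x - y) = 0 := by rw [map_sub, hxy, sub_self]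
  obtain ⟨z, hz⟩ := (hex _).mp this
  rw [LinearMap.zero_apply] at hz
  have : x - y = 0 := hz.symm
  exact sub_eq_zero.mp this

omit [Module.FaithfullyFlat S S'] in
lemma cancel_tmul (s' : S') (x : S ⊗[R] A) :
    AlgebraTensorModule.cancelBaseChange R S S' S' A (s' ⊗ₜ[S] x) = s' • F R A S S' x := by
  induction x using TensorProduct.induction_on with
  | zero => simp
  | add u v hu hv => rw [tmul_add, map_add, map_add, smul_add, hu, hv]
  | tmul t a =>
    rw [AlgebraTensorModule.cancelBaseChange_tmul, F_tmul, smul_tmul', smul_eq_mul,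
      Algebra.smul_def, mul_comm]

lemma surj_of_conj (g0 : S ⊗[R] A →ₗ[S] S ⊗[R] A) (g' : S' ⊗[R] A ≃ₗ[S'] S' ⊗[R] A)
    (hc : ∀ x, F R A S S' (g0 x) = g' (F R A S S' x)) :
    Function.Surjective g0 := by
  set e := AlgebraTensorModule.cancelBaseChange R S S' S' A with he_def
  have hE : ∀ y, e (g0.lTensor S' y) = g' (e y) := by
    intro y
    induction y using TensorProduct.induction_on with
    | zero => simp
    | add u v hu hv => rw [map_add, map_add, hu, hv, map_add, map_add]
    | tmul s' x =>
      rw [LinearMap.lTensor_tmul, cancel_tmul, cancel_tmul, hc, map_smul]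
  have hsurj_l : Function.Surjective (g0.lTensor S') := by
    intro z
    refine ⟨e.symm (g'.symm (e z)), e.injective ?_⟩
    rw [hE, LinearEquiv.apply_symm_apply, LinearEquiv.apply_symm_apply]
  have h0 : Function.Exact (g0.lTensor S')
      ((0 : (S ⊗[R] A) →ₗ[S] PUnit.{1}).lTensor S') := by
    intro y
    constructor
    · intro _
      exact hsurj_l y
    · intro _
      rw [LinearMap.lTensor_zero, LinearMap.zero_apply]
  have hex : Function.Exact g0 (0 : (S ⊗[R] A) →ₗ[S] PUnit.{1}) :=
    Module.FaithfullyFlat.lTensor_reflects_exact S S' _ _ h0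
  intro x
  exact (hex x).mp rfl

end AutSheafAux

open AutSheafAux


/-- **Proposition 3 (sheaf property of `Aut(A)`).** Let `A` be an `𝓜`-algebra
over `R`. For every `R`-algebra `S` and every faithfully flat `S`-algebra `S'`,
the sequence `Aut(A)(S) → Aut(A)(S') ⇉ Aut(A)(S' ⊗_S S')` is exact; i.e. the
group functor `Aut(A)` is a sheaf for the faithfully flat topology on `R`-alg.
Here `Aut(A)(S)` consists of the `S`-linear automorphisms of `S ⊗_R A`
preserving the base-changed `𝓜`-products, the restriction maps are induced by
functoriality (an automorphism `g` maps to the unique automorphism `g''` with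
`g'' (1 ⊗ a) = (f ⊗ id_A)(g (1 ⊗ a))`), and exactness says: the first map is
injective, its image lands in the equalizer of the two maps to
`Aut(A)(S' ⊗_S S')`, and every element of the equalizer descends. -/
theorem aut_functor_is_flat_sheaf {R 𝓜 A : Type} [Nonempty 𝓜] [CommRing R]
    [AddCommGroup A] [Module R A] (μ : 𝓜 → A →ₗ[R] A →ₗ[R] A)
    -- S an R-algebra, S' a faithfully flat S-algebra
    (S S' : Type) [CommRing S] [CommRing S'] [Algebra R S] [Algebra R S']
    [Algebra S S'] [IsScalarTower R S S'] [Module.FaithfullyFlat S S']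
    -- the base-changed 𝓜-algebra structures on S ⊗ A, S' ⊗ A and (S' ⊗[S] S') ⊗ A
    (μS : 𝓜 → (S ⊗[R] A) →ₗ[S] (S ⊗[R] A) →ₗ[S] (S ⊗[R] A))
    (hμS : ∀ (m : 𝓜) (s t : S) (a b : A),
      μS m (s ⊗ₜ[R] a) (t ⊗ₜ[R] b) = (s * t) ⊗ₜ[R] (μ m a b))
    (μS' : 𝓜 → (S' ⊗[R] A) →ₗ[S'] (S' ⊗[R] A) →ₗ[S'] (S' ⊗[R] A))
    (hμS' : ∀ (m : 𝓜) (s t : S') (a b : A),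
      μS' m (s ⊗ₜ[R] a) (t ⊗ₜ[R] b) = (s * t) ⊗ₜ[R] (μ m a b))
    (μT : 𝓜 → ((S' ⊗[S] S') ⊗[R] A) →ₗ[S' ⊗[S] S'] ((S' ⊗[S] S') ⊗[R] A)
      →ₗ[S' ⊗[S] S'] ((S' ⊗[S] S') ⊗[R] A))
    (hμT : ∀ (m : 𝓜) (s t : S' ⊗[S] S') (a b : A),
      μT m (s ⊗ₜ[R] a) (t ⊗ₜ[R] b) = (s * t) ⊗ₜ[R] (μ m a b)) :
    -- j : S → S' and the two inclusions i₁, i₂ : S' ⇉ S' ⊗[S] S', as R-linear maps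
    ∀ j : S →ₗ[R] S', j = (IsScalarTower.toAlgHom R S S').toLinearMap →
    ∀ i₁ i₂ : S' →ₗ[R] S' ⊗[S] S',
      (∀ s : S', i₁ s = s ⊗ₜ[S] 1) → (∀ s : S', i₂ s = (1 : S') ⊗ₜ[S] s) →
    -- (1) injectivity of Aut(A)(S) → Aut(A)(S')
    ((∀ g₁ g₂ : (S ⊗[R] A) ≃ₗ[S] (S ⊗[R] A),
      (∀ (m : 𝓜) u v, g₁ (μS m u v) = μS m (g₁ u) (g₁ v)) →
      (∀ (m : 𝓜) u v, g₂ (μS m u v) = μS m (g₂ u) (g₂ v)) →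
      (∀ a : A, LinearMap.rTensor A j (g₁ ((1 : S) ⊗ₜ[R] a)) =
        LinearMap.rTensor A j (g₂ ((1 : S) ⊗ₜ[R] a))) →
      g₁ = g₂) ∧
    -- (2) the image of Aut(A)(S) lies in the equalizer
    (∀ (g : (S ⊗[R] A) ≃ₗ[S] (S ⊗[R] A)) (g' : (S' ⊗[R] A) ≃ₗ[S'] (S' ⊗[R] A)),
      (∀ (m : 𝓜) u v, g (μS m u v) = μS m (g u) (g v)) →
      (∀ (m : 𝓜) u v, g' (μS' m u v) = μS' m (g' u) (g' v)) →
      (∀ a : A, g' ((1 : S') ⊗ₜ[R] a) = LinearMap.rTensor A j (g ((1 : S) ⊗ₜ[R] a))) →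
      (∀ a : A, LinearMap.rTensor A i₁ (g' ((1 : S') ⊗ₜ[R] a)) =
        LinearMap.rTensor A i₂ (g' ((1 : S') ⊗ₜ[R] a)))) ∧
    -- (3) every element of the equalizer descends to Aut(A)(S)
    (∀ g' : (S' ⊗[R] A) ≃ₗ[S'] (S' ⊗[R] A),
      (∀ (m : 𝓜) u v, g' (μS' m u v) = μS' m (g' u) (g' v)) →
      (∀ a : A, LinearMap.rTensor A i₁ (g' ((1 : S') ⊗ₜ[R] a)) =
        LinearMap.rTensor A i₂ (g' ((1 : S') ⊗ₜ[R] a))) →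
      ∃ g : (S ⊗[R] A) ≃ₗ[S] (S ⊗[R] A),
        (∀ (m : 𝓜) u v, g (μS m u v) = μS m (g u) (g v)) ∧
        ∀ a : A, g' ((1 : S') ⊗ₜ[R] a) = LinearMap.rTensor A j (g ((1 : S) ⊗ₜ[R] a)))) := by
  intro j hj i₁ i₂ hi₁ hi₂
  have hFj : ∀ x : S ⊗[R] A, LinearMap.rTensor A j x = F R A S S' x := by
    intro x
    induction x using TensorProduct.induction_on with
    | zero => simp
    | add u v hu hv => rw [map_add, map_add, hu, hv]
    | tmul s a => rw [LinearMap.rTensor_tmul, F_tmul, hj]; rfl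
  have hI1 : ∀ x : S' ⊗[R] A, LinearMap.rTensor A i₁ x = I1 R A S S' x := by
    intro x
    induction x using TensorProduct.induction_on with
    | zero => simp
    | add u v hu hv => rw [map_add, map_add, hu, hv]
    | tmul s a => rw [LinearMap.rTensor_tmul, I1_tmul, hi₁]
  have hI2 : ∀ x : S' ⊗[R] A, LinearMap.rTensor A i₂ x = I2 R A S S' x := by
    intro x
    induction x using TensorProduct.induction_on with
    | zero => simp
    | add u v hu hv => rw [map_add, map_add, hu, hv]
    | tmul s a => rw [LinearMap.rTensor_tmul, I2_tmul, hi₂]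
  have Finj := F_injective R A S S'
  have exFG := exact_F_G R A S S'
  have hFμ : ∀ (m : 𝓜) (u v : S ⊗[R] A),
      F R A S S' (μS m u v) = μS' m (F R A S S' u) (F R A S S' v) := by
    intro m u v
    induction u using TensorProduct.induction_on with
    | zero => simp
    | add u1 u2 h1 h2 => simp only [map_add, LinearMap.add_apply, h1, h2]
    | tmul s a =>
      induction v using TensorProduct.induction_on with
      | zero => simp
      | add v1 v2 h1 h2 => simp only [map_add, h1, h2]
      | tmul t b => rw [hμS, F_tmul, F_tmul, F_tmul, hμS', map_mul]
  refine ⟨?_, ?_, ?_⟩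
  · -- (1) injectivity
    intro g₁ g₂ _ _ hagree
    have h1 : ∀ a : A, g₁ ((1:S) ⊗ₜ[R] a) = g₂ ((1:S) ⊗ₜ[R] a) := fun a =>
      Finj (by rw [← hFj, ← hFj]; exact hagree a)
    refine LinearEquiv.ext fun x => ?_
    induction x using TensorProduct.induction_on with
    | zero => simp
    | add u v hu hv => rw [map_add, map_add, hu, hv]
    | tmul s a =>
      have hs : s ⊗ₜ[R] a = s • ((1:S) ⊗ₜ[R] a) := by
        rw [smul_tmul', smul_eq_mul, mul_one]
      rw [hs, map_smul, map_smul, h1]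
  · -- (2) equalizer
    intro g g' _ _ hcomp a
    rw [hI1, hI2, hcomp a, hFj]
    exact I1_F_eq_I2_F R A S S' _
  · -- (3) descent
    intro g' hg'mul heq
    have hGzero : ∀ a : A, G R A S S' (g' ((1:S') ⊗ₜ[R] a)) = 0 := fun a => by
      rw [G_apply, ← hI1, ← hI2, heq a, sub_self]
    have hchoice : ∀ a : A, ∃ y, F R A S S' y = g' ((1:S') ⊗ₜ[R] a) := fun a =>
      (exFG _).mp (hGzero a)
    choose d hd using hchoice
    have hdadd : ∀ a b : A, d (a + b) = d a + d b := fun a b =>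
      Finj (by rw [map_add, hd, hd, hd, ← map_add, ← tmul_add])
    have hdsmul : ∀ (r : R) (a : A), d (r • a) = r • d a := fun r a => by
      apply Finj
      have h1 : F R A S S' (d (r • a)) = r • g' ((1:S') ⊗ₜ[R] a) := by
        rw [hd, tmul_smul, ← algebraMap_smul S' r, map_smul, algebraMap_smul]
      have h2 : F R A S S' (r • d a) = r • g' ((1:S') ⊗ₜ[R] a) := by
        rw [← algebraMap_smul S r (d a), map_smul, algebraMap_smul, hd]
      rw [h1, h2]
    let D : A →ₗ[R] S ⊗[R] A :=
      { toFun := d, map_add' := hdadd, map_smul' := hdsmul }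
    let g0 : S ⊗[R] A →ₗ[S] S ⊗[R] A := D.liftBaseChange S
    have hFg0 : ∀ x, F R A S S' (g0 x) = g' (F R A S S' x) := by
      intro x
      induction x using TensorProduct.induction_on with
      | zero => simp
      | add u v hu hv => rw [map_add, map_add, hu, hv, map_add, map_add]
      | tmul s a =>
        have hg0t : g0 (s ⊗ₜ[R] a) = s • d a := rfl
        rw [hg0t, map_smul, hd, F_tmul,
          show (algebraMap S S' s) ⊗ₜ[R] a = algebraMap S S' s • ((1:S') ⊗ₜ[R] a) by
            rw [smul_tmul', smul_eq_mul, mul_one],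
          map_smul, algebraMap_smul]
    have hg0inj : Function.Injective g0 := fun x y hxy =>
      Finj (g'.injective (by rw [← hFg0, ← hFg0, hxy]))
    have hg0surj := surj_of_conj R A S S' g0 g' hFg0
    refine ⟨LinearEquiv.ofBijective g0 ⟨hg0inj, hg0surj⟩, ?_, ?_⟩
    · intro m u v
      apply Finj
      show F R A S S' (g0 (μS m u v)) = F R A S S' (μS m (g0 u) (g0 v))
      rw [hFg0, hFμ, hg'mul, ← hFg0, ← hFg0, ← hFμ]
    · intro a
      rw [hFj]
      show g' ((1:S') ⊗ₜ[R] a) = F R A S S' (g0 ((1:S) ⊗ₜ[R] a))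
      rw [hFg0, show F R A S S' ((1:S) ⊗ₜ[R] a) = (1:S') ⊗ₜ[R] a by
        rw [F_tmul, map_one]]
end

section
/- Let R be a commutative ring and 0 → I → P → A → 0 an exact sequence of R-modules where P is free of infinite rank and A is free of finite rank. Then I is free. (Via Gabel's theorem: a stably free module that is not finitely generated is free.) -/
open LinearMap

section Aux

variable {R A Q₁ Q₂ : Type} [CommRing R]
  [AddCommGroup A] [Module R A] [AddCommGroup Q₁] [Module R Q₁]
  [AddCommGroup Q₂] [Module R Q₂]

/-- If `G : Q₁ × Q₂ → A` and its restriction `g₁` to the first factor admits a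
linear section `h₁`, then `ker G ≃ ker g₁ × Q₂`. -/
noncomputable def kerProdEquivAux (G : Q₁ × Q₂ →ₗ[R] A) (h₁ : A →ₗ[R] Q₁)
    (hsec : (G ∘ₗ inl R Q₁ Q₂) ∘ₗ h₁ = LinearMap.id) :
    ↥(ker G) ≃ₗ[R] ↥(ker (G ∘ₗ inl R Q₁ Q₂)) × Q₂ := by
  set g₁ := G ∘ₗ inl R Q₁ Q₂ with hg₁
  have hsec' : ∀ a, g₁ (h₁ a) = a := fun a => LinearMap.congr_fun hsec a
  have hG : ∀ x y, G (x, y) = g₁ x + G (0, y) := by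
    intro x y
    rw [show ((x, y) : Q₁ × Q₂) = (x, 0) + (0, y) by simp, map_add]
    rfl
  have mem₁ : ∀ z : ↥(ker G), z.1.1 + h₁ (G (0, z.1.2)) ∈ ker g₁ := by
    rintro ⟨⟨x, y⟩, hz⟩
    have hz' : G (x, y) = 0 := hz
    show g₁ (x + h₁ (G (0, y))) = 0
    rw [map_add, hsec', ← hG, hz']
  have mem₂ : ∀ (k : ↥(ker g₁)) (y : Q₂), ((k : Q₁) - h₁ (G (0, y)), y) ∈ ker G := by
    rintro ⟨k, hk⟩ y
    have hk' : g₁ k = 0 := hk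
    show G (k - h₁ (G (0, y)), y) = 0
    rw [hG, map_sub, hsec', hk', zero_sub, neg_add_cancel]
  exact
  { toFun := fun z => (⟨z.1.1 + h₁ (G (0, z.1.2)), mem₁ z⟩, z.1.2)
    invFun := fun w => ⟨((w.1 : Q₁) - h₁ (G (0, w.2)), w.2), mem₂ w.1 w.2⟩
    map_add' := by
      rintro ⟨⟨x₁, x₂⟩, hx⟩ ⟨⟨y₁, y₂⟩, hy⟩
      refine Prod.ext (Subtype.ext ?_) rfl
      show x₁ + y₁ + h₁ (G (0, x₂ + y₂)) = x₁ + h₁ (G (0, x₂)) + (y₁ + h₁ (G (0, y₂)))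
      rw [show ((0, x₂ + y₂) : Q₁ × Q₂) = (0, x₂) + (0, y₂) by simp, map_add, map_add]
      abel
    map_smul' := by
      rintro c ⟨⟨x₁, x₂⟩, hx⟩
      refine Prod.ext (Subtype.ext ?_) rfl
      show c • x₁ + h₁ (G (0, c • x₂)) = c • (x₁ + h₁ (G (0, x₂)))
      rw [show ((0, c • x₂) : Q₁ × Q₂) = c • (0, x₂) by simp, map_smul, map_smul, smul_add]
    left_inv := by
      rintro ⟨⟨x₁, x₂⟩, hx⟩
      exact Subtype.ext (Prod.ext (by simp) rfl)
    right_inv := by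
      rintro ⟨⟨k, hk⟩, y⟩
      exact Prod.ext (Subtype.ext (by simp)) rfl }

/-- Splitting of a surjection with a section. -/
noncomputable def splitAux (g : Q₁ →ₗ[R] A) (h : A →ₗ[R] Q₁)
    (hs : g ∘ₗ h = LinearMap.id) : Q₁ ≃ₗ[R] ↥(ker g) × A :=
  ((g.exact_subtype_ker_map.splitSurjectiveEquiv
    (Submodule.injective_subtype _)) ⟨h, hs⟩).1

end Aux

/-- Let `0 → I → P → A → 0` be an exact sequence of `R`-modules where `P` is
free of infinite rank and `A` is free of finite rank. Then `I` is free (via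
Gabel's theorem: a stably free module that is not finitely generated is free). -/
theorem kernel_free_of_infinite_rank {R I P A : Type} [CommRing R]
    [AddCommGroup I] [Module R I] [AddCommGroup P] [Module R P]
    [AddCommGroup A] [Module R A]
    -- P is free of infinite rank
    (κ : Type) [Infinite κ] (bP : Module.Basis κ R P)
    -- A is free of finite rank
    (n : ℕ) (bA : Module.Basis (Fin n) R A)
    -- the exact sequence
    (f : I →ₗ[R] P) (g : P →ₗ[R] A)
    (hf : Function.Injective f) (hg : Function.Surjective g)
    (hexact : LinearMap.range f = LinearMap.ker g) :
    Module.Free R I := by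
  classical
  haveI : Module.Free R A := Module.Free.of_basis bA
  have h0 : ∀ y, g (f y) = 0 := fun y => by
    have h : f y ∈ LinearMap.range f := LinearMap.mem_range_self f y
    rw [hexact] at h
    exact h
  -- transport the sequence to `κ →₀ R`
  set f' : I →ₗ[R] (κ →₀ R) := bP.repr.toLinearMap ∘ₗ f with hf'def
  set g' : (κ →₀ R) →ₗ[R] A := g ∘ₗ bP.repr.symm.toLinearMap with hg'def
  have hf' : Function.Injective f' := bP.repr.injective.comp hf
  have hg' : Function.Surjective g' := hg.comp bP.repr.symm.surjective
  have hexact' : LinearMap.range f' = LinearMap.ker g' := by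
    ext x
    simp only [hf'def, hg'def, LinearMap.mem_range, LinearMap.mem_ker, coe_comp,
      Function.comp_apply, LinearEquiv.coe_coe]
    constructor
    · rintro ⟨y, rfl⟩
      simp [h0]
    · intro hx
      have : bP.repr.symm x ∈ LinearMap.ker g := hx
      rw [← hexact] at this
      obtain ⟨y, hy⟩ := this
      exact ⟨y, by rw [hy]; simp⟩
  -- choose preimages of the basis of `A`
  choose p hp using fun i : Fin n => hg' (bA i)
  set s : Finset κ := Finset.univ.biUnion fun i => (p i).support with hs
  set S : Set κ := (↑s : Set κ) with hS
  -- split `κ →₀ R` along `S`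
  set E : (κ →₀ R) ≃ₗ[R] (↥S →₀ R) × (↥Sᶜ →₀ R) :=
    (Finsupp.domLCongr (Equiv.Set.sumCompl S).symm).trans
      (Finsupp.sumFinsuppLEquivProdFinsupp R) with hE
  set G : (↥S →₀ R) × (↥Sᶜ →₀ R) →ₗ[R] A := g' ∘ₗ E.symm.toLinearMap with hG
  set g₁ : (↥S →₀ R) →ₗ[R] A := G ∘ₗ inl R _ _ with hg₁
  -- the restriction to the first factor is surjective
  have hEsnd : ∀ i, (E (p i)).2 = 0 := by
    intro i
    ext y
    have hy : (↑y : κ) ∉ s := y.2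
    have hzero : (p i) ↑y = 0 :=
      Finsupp.notMem_support_iff.mp
        (fun hmem => hy (Finset.mem_biUnion.mpr ⟨i, Finset.mem_univ i, hmem⟩))
    rw [hE]
    simp [Finsupp.snd_sumFinsuppLEquivProdFinsupp, Finsupp.domLCongr_apply,
      Finsupp.equivMapDomain_apply, Equiv.Set.sumCompl_apply_inr, hzero]
  have hg₁surj : Function.Surjective g₁ := by
    rw [← LinearMap.range_eq_top, ← top_le_iff, ← bA.span_eq, Submodule.span_le]
    rintro a ⟨i, rfl⟩
    refine ⟨(E (p i)).1, ?_⟩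
    have heq : ((E (p i)).1, (0 : ↥Sᶜ →₀ R)) = E (p i) := by
      rw [← hEsnd i]
    show G ((E (p i)).1, 0) = bA i
    rw [heq, hG]
    show g' (E.symm (E (p i))) = bA i
    rw [LinearEquiv.symm_apply_apply, hp i]
  -- section of g₁
  obtain ⟨h₁, hh₁⟩ := Module.projective_lifting_property g₁ LinearMap.id hg₁surj
  -- `I ≃ ker g'`
  have e₀ : I ≃ₗ[R] ↥(ker g') :=
    (LinearEquiv.ofInjective f' hf').trans (LinearEquiv.ofEq _ _ hexact')
  -- `ker g' ≃ ker G`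
  have hkG : Submodule.map (E : (κ →₀ R) →ₗ[R] (↥S →₀ R) × (↥Sᶜ →₀ R)) (ker g') = ker G := by
    ext x
    simp only [Submodule.mem_map, LinearMap.mem_ker]
    constructor
    · rintro ⟨y, hy, rfl⟩
      show g' (E.symm (E y)) = 0
      rw [LinearEquiv.symm_apply_apply]
      exact hy
    · intro hx
      exact ⟨E.symm x, hx, by simp⟩
  have e₁ : ↥(ker g') ≃ₗ[R] ↥(ker G) :=
    (E.submoduleMap (ker g')).trans (LinearEquiv.ofEq _ _ hkG)
  -- `ker G ≃ ker g₁ × Q₂`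
  have e₂ : ↥(ker G) ≃ₗ[R] ↥(ker g₁) × (↥Sᶜ →₀ R) := kerProdEquivAux G h₁ hh₁
  -- `Sᶜ` is infinite, so `Fin n ⊕ Sᶜ ≃ Sᶜ`
  haveI : Infinite ↥Sᶜ := Set.infinite_coe_iff.mpr (s.finite_toSet.infinite_compl)
  have hcard : Nonempty ((Fin n ⊕ ↥Sᶜ) ≃ ↥Sᶜ) := by
    apply Cardinal.eq.1
    rw [Cardinal.mk_sum, Cardinal.lift_id, Cardinal.lift_id]
    exact Cardinal.add_eq_right (Cardinal.infinite_iff.1 inferInstance)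
      ((Cardinal.lt_aleph0_of_finite _).le.trans (Cardinal.infinite_iff.1 inferInstance))
  obtain ⟨t⟩ := hcard
  -- `Q₂ ≃ (Fin n →₀ R) × Q₂`
  have e₃ : (↥Sᶜ →₀ R) ≃ₗ[R] (Fin n →₀ R) × (↥Sᶜ →₀ R) :=
    (Finsupp.domLCongr t.symm).trans (Finsupp.sumFinsuppLEquivProdFinsupp R)
  -- splitting of `g₁` : `Q₁ ≃ ker g₁ × A`
  have e₄ : (↥S →₀ R) ≃ₗ[R] ↥(ker g₁) × A := splitAux g₁ h₁ hh₁
  -- assemble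
  have efin : I ≃ₗ[R] (↥S →₀ R) × (↥Sᶜ →₀ R) :=
    (((((e₀.trans e₁).trans e₂).trans
      ((LinearEquiv.refl R ↥(ker g₁)).prodCongr e₃)).trans
      ((LinearEquiv.refl R ↥(ker g₁)).prodCongr
        ((bA.repr.symm.prodCongr (LinearEquiv.refl R (↥Sᶜ →₀ R)))))).trans
      ((LinearEquiv.prodAssoc R ↥(ker g₁) A (↥Sᶜ →₀ R)).symm)).trans
      ((e₄.symm).prodCongr (LinearEquiv.refl R (↥Sᶜ →₀ R)))
  exact Module.Free.of_equiv efin.symm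
end

section
/- Let A = ⊕_{λ∈Λ} A_λ be a Λ-graded 𝓜-algebra over R, finitely generated as an 𝓜-algebra, with each A_λ free of finite rank. Then there is a finite subset X of homogeneous elements of A such that the canonical surjection η : A(X) → A exists, A(X) admits a Λ-grading in which every element of M(X) is homogeneous, and η is a Λ-graded homomorphism of 𝓜-algebras. -/
open TensorProduct Finsupp

/-- Auxiliary: the degree function on the free magma induced by degrees of generators. -/
def magDeg {𝓜 X Λ : Type} (d : Λ → 𝓜 → Λ → Λ) (degX : X → Λ) :
    FreeMMagma 𝓜 X → Λ
  | .of k => degX k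
  | .mul b m c => d (magDeg d degX b) m (magDeg d degX c)

/-- Auxiliary: the evaluation of the free magma into an `𝓜`-algebra. -/
def magEval {R 𝓜 X A : Type} [CommRing R] [AddCommGroup A] [Module R A]
    (μ : 𝓜 → A →ₗ[R] A →ₗ[R] A) (ι : X → A) : FreeMMagma 𝓜 X → A
  | .of k => ι k
  | .mul b m c => μ m (magEval μ ι b) (magEval μ ι c)

/-- **Lemma 6 (the graded case).** Let `A = ⊕_{λ∈Λ} A_λ` be a `Λ`-graded
`𝓜`-algebra over `R` (with degree function `d : Λ × 𝓜 × Λ → Λ`), finitely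
generated as an `𝓜`-algebra, with each `A_λ` free of finite rank. Then there
is a finite set `X = {ι 0, …, ι (n-1)}` of homogeneous elements of `A` such
that: the canonical surjection `η : A(X) → A` exists; `A(X)` admits a
`Λ`-grading (a degree function on the basis `M(X)`) in which every element of
`M(X)` is homogeneous and products behave via `d`; and `η` is a `Λ`-graded
homomorphism of `𝓜`-algebras. -/
theorem graded_generators_lemma {R 𝓜 Λ A : Type} [CommRing R] [Nonempty 𝓜]
    [AddCommGroup Λ] [AddCommGroup A] [Module R A] [DecidableEq Λ]
    (𝒜 : Λ → Submodule R A) (hinternal : DirectSum.IsInternal 𝒜)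
    (μ : 𝓜 → A →ₗ[R] A →ₗ[R] A) (d : Λ → 𝓜 → Λ → Λ)
    (hgraded : ∀ (α β : Λ) (m : 𝓜) (a b : A),
      a ∈ 𝒜 α → b ∈ 𝒜 β → μ m a b ∈ 𝒜 (d α m β))
    (hfree : ∀ lam : Λ, Module.Free R (𝒜 lam))
    (hfin : ∀ lam : Λ, Module.Finite R (𝒜 lam))
    (hfg : ∃ gs : Finset A, ∀ p : Submodule R A, (∀ g ∈ gs, g ∈ p) →
      (∀ (m : 𝓜) a b, a ∈ p → b ∈ p → μ m a b ∈ p) → p = ⊤) :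
    ∃ (n : ℕ) (ι : Fin n → A) (degX : Fin n → Λ),
      (∀ k, ι k ∈ 𝒜 (degX k)) ∧
      ∃ deg : FreeMMagma 𝓜 (Fin n) → Λ,
        (∀ k, deg (.of k) = degX k) ∧
        (∀ b (m : 𝓜) c, deg (.mul b m c) = d (deg b) m (deg c)) ∧
        ∃ η : (FreeMMagma 𝓜 (Fin n) →₀ R) →ₗ[R] A,
          Function.Surjective η ∧
          (∀ k, η (Finsupp.single (.of k) 1) = ι k) ∧
          (∀ (m : 𝓜) a b, η (fmul m a b) = μ m (η a) (η b)) ∧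
          (∀ u : FreeMMagma 𝓜 (Fin n), η (Finsupp.single u 1) ∈ 𝒜 (deg u)) := by
  classical
  obtain ⟨gs, hgs⟩ := hfg
  -- the set of homogeneous elements
  set S : Set A := ⋃ lam, (𝒜 lam : Set A) with hS
  have hspanS : Submodule.span R S = ⊤ := by
    rw [hS, Submodule.span_iUnion]
    simp only [Submodule.span_eq]
    exact hinternal.submodule_iSup_eq_top
  -- for each generator, a finite set of homogeneous elements spanning it
  have hT : ∀ g : A, ∃ T : Finset A, ↑T ⊆ S ∧ g ∈ Submodule.span R (T : Set A) :=
    fun g => Submodule.mem_span_finite_of_mem_span (by rw [hspanS]; trivial)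
  choose T hTS hTspan using hT
  set X : Finset A := gs.biUnion T with hX
  have hXS : (X : Set A) ⊆ S := by
    intro x hx
    obtain ⟨g, _, hg⟩ := Finset.mem_biUnion.mp hx
    exact hTS g hg
  set n : ℕ := X.card with hn
  set e : {x // x ∈ X} ≃ Fin n := X.equivFin with he
  set ι : Fin n → A := fun k => (e.symm k : A) with hι
  have hιmem : ∀ k, ∃ lam, ι k ∈ 𝒜 lam := by
    intro k
    have := hXS (e.symm k).2
    simpa [hS] using this
  choose degX hdegX using hιmem
  refine ⟨n, ι, degX, hdegX, ?_⟩
  refine ⟨magDeg d degX, fun k => rfl, fun b m c => rfl, ?_⟩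
  set η0 : FreeMMagma 𝓜 (Fin n) → A := magEval μ ι with hη0
  set η : (FreeMMagma 𝓜 (Fin n) →₀ R) →ₗ[R] A := Finsupp.linearCombination R η0 with hη
  have hsingle : ∀ u : FreeMMagma 𝓜 (Fin n), η (Finsupp.single u 1) = η0 u := by
    intro u; simp [hη]
  have hmul : ∀ (m : 𝓜) (a b : FreeMMagma 𝓜 (Fin n) →₀ R),
      η (fmul m a b) = μ m (η a) (η b) := by
    intro m a b
    trans a.sum fun u ru => b.sum fun v rv => (ru * rv) • μ m (η0 u) (η0 v)
    · rw [fmul, map_finsuppSum]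
      refine Finsupp.sum_congr fun u _ => ?_
      rw [map_finsuppSum]
      refine Finsupp.sum_congr fun v _ => ?_
      rw [hη, Finsupp.linearCombination_single]
      rfl
    · rw [hη, Finsupp.linearCombination_apply, Finsupp.linearCombination_apply]
      simp only [Finsupp.sum, map_sum, LinearMap.sum_apply, map_smul,
        LinearMap.smul_apply, Finset.smul_sum, mul_smul]
      rw [Finset.sum_comm]
      exact Finset.sum_congr rfl fun v _ => Finset.sum_congr rfl fun u _ => smul_comm _ _ _
  have hhom : ∀ u : FreeMMagma 𝓜 (Fin n), η0 u ∈ 𝒜 (magDeg d degX u) := by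
    intro u
    induction u with
    | of k => exact hdegX k
    | mul b m c ihb ihc => exact hgraded _ _ m _ _ ihb ihc
  refine ⟨η, ?_, fun k => hsingle _, fun m a b => hmul m a b,
    fun u => by rw [hsingle]; exact hhom u⟩
  -- surjectivity
  rw [← LinearMap.range_eq_top]
  apply hgs
  · intro g hg
    have : Submodule.span R (T g : Set A) ≤ LinearMap.range η := by
      rw [Submodule.span_le]
      intro x hx
      have hxX : x ∈ X := Finset.mem_biUnion.mpr ⟨g, hg, hx⟩
      refine ⟨Finsupp.single (.of (e ⟨x, hxX⟩)) 1, ?_⟩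
      rw [hsingle]
      show ι (e ⟨x, hxX⟩) = x
      rw [hι]; simp
    exact this (hTspan g)
  · rintro m a b ⟨x, rfl⟩ ⟨y, rfl⟩
    exact ⟨fmul m x y, hmul m x y⟩
end

section
/- Let V = ⊕_{n∈ℤ} V_n be a ℤ-graded 𝓜-algebra (for 𝓜 = ℤ) over R with products satisfying (V_i)_m(V_j) ⊆ V_{i+j−m−1}, generated by a finite set X of homogeneous elements with |X| ≥ 1. Then for every n ∈ ℤ, the graded component A(X)_n of the free 𝓜-algebra A(X) on X (graded as in Lemma on gradings) is a free R-module of infinite rank, i.e., contains elements of M(X) of arbitrarily large length. -/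
open TensorProduct Finsupp

/-- The `ℤ`-grading on the free `ℤ`-algebra `A(X)` determined by the degrees
`degX` of the generators: `deg (b ∘ₘ c) = deg b + deg c - m - 1`. -/
def fdeg {n : ℕ} (degX : Fin n → ℤ) : FreeMMagma ℤ (Fin n) → ℤ
  | .of k => degX k
  | .mul b m c => fdeg degX b + fdeg degX c - m - 1

/-- A sequence of magma elements of fixed degree `n` with strictly growing length. -/
def degSeq {nX : ℕ} (degX : Fin nX → ℤ) (x0 : Fin nX) (n : ℤ) : ℕ → FreeMMagma ℤ (Fin nX)
  | 0 => .mul (.of x0) (2 * degX x0 - 1 - n) (.of x0)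
  | k + 1 => .mul (degSeq degX x0 n k) (degX x0 - 1) (.of x0)

theorem degSeq_fdeg {nX : ℕ} (degX : Fin nX → ℤ) (x0 : Fin nX) (n : ℤ) :
    ∀ k, fdeg degX (degSeq degX x0 n k) = n := by
  intro k
  induction k with
  | zero => simp only [degSeq, fdeg]; omega
  | succ k ih => simp only [degSeq, fdeg]; omega

theorem degSeq_len {nX : ℕ} (degX : Fin nX → ℤ) (x0 : Fin nX) (n : ℤ) :
    ∀ k, (degSeq degX x0 n k).len = k + 2 := by
  intro k
  induction k with
  | zero => rfl
  | succ k ih => simp only [degSeq, FreeMMagma.len]; omega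

/-- **Infinite rank of the graded components of the free algebra.** Let
`V = ⊕_{n∈ℤ} Vₙ` be a `ℤ`-graded `𝓜`-algebra (`𝓜 = ℤ`) over `R` with
`(V_i)_m (V_j) ⊆ V_{i+j-m-1}`, generated by a finite set `X` of homogeneous
elements with `|X| ≥ 1`. Then for every `n ∈ ℤ` the graded component `A(X)_n`
of the free `𝓜`-algebra on `X` is a free `R`-module of infinite rank; in
particular it contains elements of `M(X)` of arbitrarily large length. -/
theorem free_graded_component_infinite_rank {R V : Type} [CommRing R]
    [AddCommGroup V] [Module R V]
    (𝒱 : ℤ → Submodule R V) (hinternal : DirectSum.IsInternal 𝒱)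
    (μ : ℤ → V →ₗ[R] V →ₗ[R] V)
    (hgraded : ∀ (i j m : ℤ) (a b : V),
      a ∈ 𝒱 i → b ∈ 𝒱 j → μ m a b ∈ 𝒱 (i + j - m - 1))
    -- the finite set X of homogeneous generators, with |X| ≥ 1
    (nX : ℕ) (hnX : 1 ≤ nX) (ι : Fin nX → V) (degX : Fin nX → ℤ)
    (hhomog : ∀ k, ι k ∈ 𝒱 (degX k))
    (hgen : ∀ p : Submodule R V, (∀ k, ι k ∈ p) →
      (∀ (m : ℤ) (a b : V), a ∈ p → b ∈ p → μ m a b ∈ p) → p = ⊤) :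
    ∀ n : ℤ,
      -- the degree-n basis elements of A(X) form an infinite set ...
      {u : FreeMMagma ℤ (Fin nX) | fdeg degX u = n}.Infinite ∧
      -- ... containing elements of arbitrarily large length ...
      (∀ k : ℕ, ∃ u : FreeMMagma ℤ (Fin nX), fdeg degX u = n ∧ k < u.len) ∧
      -- ... and A(X)_n is a free R-module with this set as basis
      Nonempty (Module.Basis {u : FreeMMagma ℤ (Fin nX) // fdeg degX u = n} R
        (Submodule.span R ((fun u => Finsupp.single u (1 : R)) ''
          {u : FreeMMagma ℤ (Fin nX) | fdeg degX u = n}))) := by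
  intro n
  set x0 : Fin nX := ⟨0, hnX⟩
  refine ⟨?_, ?_, ?_⟩
  · apply Set.infinite_of_injective_forall_mem (f := degSeq degX x0 n)
    · intro a b hab
      have := congrArg FreeMMagma.len hab
      rw [degSeq_len, degSeq_len] at this
      omega
    · intro k
      exact degSeq_fdeg degX x0 n k
  · intro k
    exact ⟨degSeq degX x0 n k, degSeq_fdeg degX x0 n k, by rw [degSeq_len]; omega⟩
  · set S := {u : FreeMMagma ℤ (Fin nX) | fdeg degX u = n}
    have li : LinearIndependent R fun u : S => Finsupp.single (u : FreeMMagma ℤ (Fin nX)) (1 : R) := by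
      have h := (Finsupp.basisSingleOne (R := R) (ι := FreeMMagma ℤ (Fin nX))).linearIndependent
      have h2 := h.comp (Subtype.val : S → FreeMMagma ℤ (Fin nX)) Subtype.val_injective
      simp only [Finsupp.coe_basisSingleOne] at h2
      exact h2
    have hrange : Set.range (fun u : S => Finsupp.single (u : FreeMMagma ℤ (Fin nX)) (1 : R))
        = (fun u => Finsupp.single u (1 : R)) '' S := (Set.image_eq_range (fun u => Finsupp.single u (1 : R)) S).symm
    exact ⟨(Module.Basis.span li).map (LinearEquiv.ofEq _ _ (by rw [hrange]))⟩
end
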